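/- arXiv:2508.07158 — 4 statements merged into one kernel-verified Lean document; each statement's English description precedes it below -/
import Mathlib

section
/- Let F = (f_1,…,f_N), N ≥ 2, be a uniform tight frame with bound A > 0 for an n-dimensional complex inner product space H, and assume |⟨f_i,f_j⟩| is the same for all pairs i ≠ j. Let p ≥ 2 and let G = (g_1,…,g_N) be a dual frame of F whose 1-erasure Frobenius average error satisfies ((1/N)∑_{i=1}^N (‖f_i‖·‖g_i‖)^p)^{1/p} = n/N. Then for every 1 ≤ m ≤ N, the m-erasure Frobenius average error satisfies AE_F^{(m),p}(F,G) ≥ sqrt( m·(n/N)² + m(m−1)(nN − n²)/(N²(N−1)) ). -/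
/-!
Averaged over all `m`-subsets `Λ`, the squared Frobenius error
`∑_{j,k ∈ Λ} ⟪g k, g j⟫ ⟪f j, f k⟫` counts each diagonal term `‖f i‖² ‖g i‖²` in
`binom(N-1, m-1)` subsets and each off-diagonal term in `binom(N-2, m-2)` subsets. For `Λ = univ`
the double sum is the trace of the identity, `n`, so the mean is an affine function of
`D = ∑ i, ‖f i‖² ‖g i‖²` with nonnegative slope. Cauchy–Schwarz applied to
`n = ∑ i, ⟪f i, g i⟫` gives `D ≥ n² / N`, which bounds the mean of the squared errors, and the
power mean inequality with exponent `p / 2 ≥ 1` carries the bound over to the `p`-th power mean.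
-/

open Finset
open scoped ComplexInnerProductSpace

section Counting

variable {α : Type*} [DecidableEq α]

theorem card_filter_superset_powersetCard {s t : Finset α} (ht : t ⊆ s) {m : ℕ} (hm : #t ≤ m) :
    #{Λ ∈ powersetCard m s | t ⊆ Λ} = (#s - #t).choose (m - #t) := by
  rw [← card_sdiff_of_subset ht, ← card_powersetCard]
  refine card_nbij' (· \ t) (· ∪ t) ?_ ?_ ?_ ?_
  · intro Λ hΛ
    simp only [mem_coe, mem_filter, mem_powersetCard] at hΛ ⊢
    obtain ⟨⟨hΛs, rfl⟩, htΛ⟩ := hΛ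
    exact ⟨sdiff_subset_sdiff hΛs le_rfl, card_sdiff_of_subset htΛ⟩
  · intro Λ hΛ
    simp only [mem_coe, mem_filter, mem_powersetCard] at hΛ ⊢
    obtain ⟨hΛs, hcard⟩ := hΛ
    have hdisj : Disjoint Λ t := disjoint_of_subset_left hΛs sdiff_disjoint
    refine ⟨⟨union_subset (hΛs.trans sdiff_subset) ht, ?_⟩, subset_union_right⟩
    rw [card_union_of_disjoint hdisj, hcard]
    omega
  · intro Λ hΛ
    exact sdiff_union_of_subset (mem_filter.1 hΛ).2
  · intro Λ hΛ
    exact union_sdiff_cancel_right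
      (disjoint_of_subset_left (mem_powersetCard.1 hΛ).1 sdiff_disjoint)

theorem card_filter_superset_powersetCard_mul_descFactorial {s t : Finset α} (ht : t ⊆ s)
    (m : ℕ) :
    #{Λ ∈ powersetCard m s | t ⊆ Λ} * (#s).descFactorial #t
      = (#s).choose m * m.descFactorial #t := by
  rcases lt_or_ge m #t with hm | hm
  · rw [Nat.descFactorial_eq_zero_iff_lt.2 hm, mul_zero, mul_eq_zero, card_eq_zero,
      filter_eq_empty_iff]
    refine .inl fun Λ hΛ htΛ => ?_
    have := card_le_card htΛ
    rw [(mem_powersetCard.1 hΛ).2] at this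
    omega
  · rw [card_filter_superset_powersetCard ht hm, Nat.descFactorial_eq_factorial_mul_choose,
      Nat.descFactorial_eq_factorial_mul_choose, mul_left_comm ((#s).choose m), Nat.choose_mul hm]
    ring

theorem sum_powersetCard_sum_sum [Fintype α] {M : Type*} [AddCommMonoid M] (m : ℕ)
    (T : α → α → M) :
    ∑ Λ ∈ powersetCard m univ, ∑ j ∈ Λ, ∑ k ∈ Λ, T j k
      = ∑ j, ∑ k, #{Λ ∈ powersetCard m univ | j ∈ Λ ∧ k ∈ Λ} • T j k := by
  calc ∑ Λ ∈ powersetCard m univ, ∑ j ∈ Λ, ∑ k ∈ Λ, T j k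
      = ∑ Λ ∈ powersetCard m univ, ∑ jk ∈ Λ ×ˢ Λ, T jk.1 jk.2 := by simp_rw [sum_product]
    _ = ∑ jk : α × α, ∑ Λ ∈ powersetCard m univ with jk.1 ∈ Λ ∧ jk.2 ∈ Λ, T jk.1 jk.2 :=
        sum_comm' fun Λ jk => by simp [and_comm]
    _ = _ := by rw [← univ_product_univ, sum_product]; simp only [sum_const]

theorem card_filter_mem_mem_powersetCard_mul [Fintype α] (m : ℕ) (j k : α) :
    (Fintype.card α * (Fintype.card α - 1)) * (#{Λ ∈ powersetCard m univ | j ∈ Λ ∧ k ∈ Λ} : ℝ)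
      = (Fintype.card α).choose m *
          (m * (Fintype.card α - m) * (if j = k then 1 else 0) + m * (m - 1)) := by
  have key := card_filter_superset_powersetCard_mul_descFactorial (subset_univ {j, k}) m
  simp only [insert_subset_iff, singleton_subset_iff, card_univ] at key
  split_ifs with hjk
  · subst hjk
    simp only [and_self, insert_eq_of_mem (mem_singleton_self j), card_singleton,
      Nat.descFactorial_one] at key ⊢
    rify at key
    linear_combination ((Fintype.card α : ℝ) - 1) * key
  · rw [card_pair hjk] at key
    rify at key
    simp only [Nat.cast_descFactorial_two] at key
    linear_combination key

theorem sum_powersetCard_sum_sum_mul [Fintype α] (m : ℕ) (T : α → α → ℝ) :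
    (Fintype.card α * (Fintype.card α - 1)) *
        ∑ Λ ∈ powersetCard m univ, ∑ j ∈ Λ, ∑ k ∈ Λ, T j k
      = (Fintype.card α).choose m * (m * (Fintype.card α - m) * ∑ j, T j j +
          m * (m - 1) * ∑ j, ∑ k, T j k) := by
  rw [sum_powersetCard_sum_sum, mul_sum]
  simp_rw [mul_sum, nsmul_eq_mul, ← mul_assoc, card_filter_mem_mem_powersetCard_mul]
  simp [mul_add, add_mul, sum_add_distrib, mul_sum, mul_assoc]

end Counting

section Frames

open scoped InnerProductSpace

variable {𝕜 H ι : Type*} [RCLike 𝕜] [NormedAddCommGroup H] [InnerProductSpace 𝕜 H]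

variable (𝕜) in
def IsDualFrame [Fintype ι] (f g : ι → H) : Prop :=
  ∀ x : H, x = ∑ i, ⟪f i, x⟫_𝕜 • g i

variable (𝕜) in
/-- The squared Frobenius norm of the error operator `x ↦ ∑ i ∈ Λ, ⟪f i, x⟫ • g i`. -/
def erasureError (f g : ι → H) (Λ : Finset ι) : 𝕜 :=
  ∑ j ∈ Λ, ∑ k ∈ Λ, ⟪g k, g j⟫_𝕜 * ⟪f j, f k⟫_𝕜

theorem IsDualFrame.sum_inner_eq_finrank [Fintype ι] [FiniteDimensional 𝕜 H] {f g : ι → H}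
    (hfg : IsDualFrame 𝕜 f g) : ∑ i, ⟪f i, g i⟫_𝕜 = Module.finrank 𝕜 H := by
  let b := stdOrthonormalBasis 𝕜 H
  have hb : ∀ s, ⟪b s, b s⟫_𝕜 = ∑ i, ⟪f i, b s⟫_𝕜 * ⟪b s, g i⟫_𝕜 := fun s => by
    calc ⟪b s, b s⟫_𝕜 = ⟪b s, ∑ i, ⟪f i, b s⟫_𝕜 • g i⟫_𝕜 := congrArg _ (hfg (b s))
      _ = _ := by simp only [inner_sum, inner_smul_right]
  calc ∑ i, ⟪f i, g i⟫_𝕜 = ∑ i, ∑ s, ⟪f i, b s⟫_𝕜 * ⟪b s, g i⟫_𝕜 := by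
        simp only [b.sum_inner_mul_inner]
    _ = ∑ s, ⟪b s, b s⟫_𝕜 := by rw [sum_comm]; simp only [hb]
    _ = Module.finrank 𝕜 H := by simp

theorem erasureError_eq_sum_inner_self {ι' : Type*} [Fintype ι'] (b : OrthonormalBasis ι' 𝕜 H)
    (f g : ι → H) (Λ : Finset ι) :
    erasureError 𝕜 f g Λ =
      ∑ s, ⟪∑ j ∈ Λ, ⟪g j, b s⟫_𝕜 • f j, ∑ j ∈ Λ, ⟪g j, b s⟫_𝕜 • f j⟫_𝕜 := by
  simp only [sum_inner, inner_sum, inner_smul_left, inner_smul_right, inner_conj_symm, mul_sum,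
    erasureError]
  simp_rw [← b.sum_inner_mul_inner (g _) (g _), sum_mul]
  conv_lhs => rw [sum_comm]
  conv_rhs => rw [sum_comm]
  refine sum_congr rfl fun k _ => ?_
  conv_rhs => rw [sum_comm]
  refine sum_congr rfl fun j _ => sum_congr rfl fun s _ => ?_
  ring

theorem re_erasureError_nonneg [FiniteDimensional 𝕜 H] (f g : ι → H) (Λ : Finset ι) :
    0 ≤ RCLike.re (erasureError 𝕜 f g Λ) := by
  rw [erasureError_eq_sum_inner_self (stdOrthonormalBasis 𝕜 H), map_sum]
  exact sum_nonneg fun s _ => inner_self_nonneg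

theorem IsDualFrame.erasureError_univ [Fintype ι] {f g : ι → H} (hfg : IsDualFrame 𝕜 f g) :
    erasureError 𝕜 f g univ = ∑ i, ⟪f i, g i⟫_𝕜 := by
  refine sum_congr rfl fun j _ => ?_
  calc ∑ k, ⟪g k, g j⟫_𝕜 * ⟪f j, f k⟫_𝕜 = ⟪∑ k, ⟪f k, f j⟫_𝕜 • g k, g j⟫_𝕜 := by
        simp only [sum_inner, inner_smul_left, inner_conj_symm, mul_comm]
    _ = ⟪f j, g j⟫_𝕜 := by rw [← hfg]

theorem IsDualFrame.finrank_sq_le [Fintype ι] [FiniteDimensional 𝕜 H] {f g : ι → H}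
    (hfg : IsDualFrame 𝕜 f g) :
    (Module.finrank 𝕜 H : ℝ) ^ 2 ≤ Fintype.card ι * ∑ i, (‖f i‖ * ‖g i‖) ^ 2 := by
  have hn : (Module.finrank 𝕜 H : ℝ) ≤ ∑ i, ‖f i‖ * ‖g i‖ :=
    calc (Module.finrank 𝕜 H : ℝ) = ∑ i, RCLike.re ⟪f i, g i⟫_𝕜 := by
          rw [← map_sum, hfg.sum_inner_eq_finrank, RCLike.natCast_re]
      _ ≤ ∑ i, ‖f i‖ * ‖g i‖ :=
          sum_le_sum fun i _ => (RCLike.re_le_norm _).trans (norm_inner_le_norm _ _)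
  calc (Module.finrank 𝕜 H : ℝ) ^ 2 ≤ (∑ i, ‖f i‖ * ‖g i‖) ^ 2 := by gcongr
    _ ≤ Fintype.card ι * ∑ i, (‖f i‖ * ‖g i‖) ^ 2 := by
        simpa using sq_sum_le_card_mul_sum_sq (s := univ) (f := fun i => ‖f i‖ * ‖g i‖)

theorem IsDualFrame.card_mul_sum_re_erasureError [Fintype ι] [DecidableEq ι]
    [FiniteDimensional 𝕜 H] {f g : ι → H} (hfg : IsDualFrame 𝕜 f g) (m : ℕ) :
    (Fintype.card ι * (Fintype.card ι - 1)) *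
        ∑ Λ ∈ powersetCard m univ, RCLike.re (erasureError 𝕜 f g Λ)
      = (Fintype.card ι).choose m * (m * (Fintype.card ι - m) * ∑ i, (‖f i‖ * ‖g i‖) ^ 2 +
          m * (m - 1) * Module.finrank 𝕜 H) := by
  have hre : ∀ Λ, RCLike.re (erasureError 𝕜 f g Λ)
      = ∑ j ∈ Λ, ∑ k ∈ Λ, RCLike.re (⟪g k, g j⟫_𝕜 * ⟪f j, f k⟫_𝕜) := by
    simp [erasureError, map_sum]
  have hdiag : ∀ i, RCLike.re (⟪g i, g i⟫_𝕜 * ⟪f i, f i⟫_𝕜) = (‖f i‖ * ‖g i‖) ^ 2 := fun i => by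
    simp only [inner_self_eq_norm_sq_to_K, ← RCLike.ofReal_pow, ← RCLike.ofReal_mul,
      RCLike.ofReal_re]
    ring
  simp_rw [hre, sum_powersetCard_sum_sum_mul, hdiag, ← hre univ, hfg.erasureError_univ,
    hfg.sum_inner_eq_finrank, RCLike.natCast_re]

theorem IsDualFrame.le_mean_re_erasureError [Fintype ι] [DecidableEq ι] [FiniteDimensional 𝕜 H]
    {f g : ι → H} (hfg : IsDualFrame 𝕜 f g) (hN : 2 ≤ Fintype.card ι) {m : ℕ}
    (hm : m ≤ Fintype.card ι) :
    (m : ℝ) * ((Module.finrank 𝕜 H : ℝ) / Fintype.card ι) ^ 2 +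
        m * (m - 1) * ((Module.finrank 𝕜 H : ℝ) * Fintype.card ι - (Module.finrank 𝕜 H) ^ 2) /
          ((Fintype.card ι : ℝ) ^ 2 * (Fintype.card ι - 1)) ≤
      (1 / (Fintype.card ι).choose m : ℝ) *
        ∑ Λ ∈ powersetCard m univ, RCLike.re (erasureError 𝕜 f g Λ) := by
  have hsum := hfg.card_mul_sum_re_erasureError m
  have hD := hfg.finrank_sq_le
  have hC : (0 : ℝ) < (Fintype.card ι).choose m := by exact_mod_cast Nat.choose_pos hm
  have hN' : (2 : ℝ) ≤ Fintype.card ι := by exact_mod_cast hN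
  have hmN : (m : ℝ) ≤ Fintype.card ι := by exact_mod_cast hm
  set n : ℝ := (Module.finrank 𝕜 H : ℝ)
  set N : ℝ := (Fintype.card ι : ℝ)
  set D := ∑ i, (‖f i‖ * ‖g i‖) ^ 2
  set C : ℝ := ((Fintype.card ι).choose m : ℝ)
  set S := ∑ Λ ∈ powersetCard m univ, RCLike.re (erasureError 𝕜 f g Λ)
  have hS : S = C * (m * (N - m) * D + m * (m - 1) * n) / (N * (N - 1)) := by
    rw [eq_div_iff (by nlinarith), ← hsum, mul_comm]
  have key : 1 / C * S - (m * (n / N) ^ 2 + m * (m - 1) * (n * N - n ^ 2) / (N ^ 2 * (N - 1)))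
      = (N * D - n ^ 2) * (m * (N - m)) / (N ^ 2 * (N - 1)) := by
    have : N - 1 ≠ 0 := by linarith
    rw [hS]
    field_simp
    ring
  rw [← sub_nonneg, key]
  apply div_nonneg (mul_nonneg (by linarith) (mul_nonneg (by positivity) (by linarith)))
  nlinarith

end Frames

theorem Real.sqrt_mean_le_rpow_mean {ι : Type*} {s : Finset ι} (hs : s.Nonempty) {x : ι → ℝ}
    (hx : ∀ i ∈ s, 0 ≤ x i) {p : ℝ} (hp : 2 ≤ p) :
    √((1 / #s) * ∑ i ∈ s, x i) ≤ ((1 / #s) * ∑ i ∈ s, x i ^ (p / 2)) ^ (1 / p) := by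
  have hw : ∑ _i ∈ s, (1 / #s : ℝ) = 1 := by
    rw [sum_const, nsmul_eq_mul]
    field_simp [hs.card_pos.ne']
  have hmean := Real.arith_mean_le_rpow_mean s (fun _ => 1 / #s) x (fun _ _ => by positivity) hw
    hx (by linarith : 1 ≤ p / 2)
  rw [← mul_sum, ← mul_sum] at hmean
  have hY : 0 ≤ (1 / #s : ℝ) * ∑ i ∈ s, x i ^ (p / 2) :=
    mul_nonneg (by positivity) (sum_nonneg fun i hi => Real.rpow_nonneg (hx i hi) _)
  calc √((1 / #s) * ∑ i ∈ s, x i)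
      ≤ √(((1 / #s) * ∑ i ∈ s, x i ^ (p / 2)) ^ (1 / (p / 2))) := Real.sqrt_le_sqrt hmean
    _ = ((1 / #s) * ∑ i ∈ s, x i ^ (p / 2)) ^ (1 / p) := by
        rw [Real.sqrt_eq_rpow, ← Real.rpow_mul hY]
        ring_nf

theorem stmt_8_general {H : Type*} [NormedAddCommGroup H] [InnerProductSpace ℂ H]
    [FiniteDimensional ℂ H] (n N : ℕ) (hn : Module.finrank ℂ H = n)
    (hN : 2 ≤ N) (f : Fin N → H)
    (p : ℝ) (hp : 2 ≤ p)
    (g : Fin N → H)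
    (hdual : ∀ x : H, x = ∑ i, ⟪f i, x⟫ • g i)
    (m : ℕ) (hmN : m ≤ N) :
    Real.sqrt ((m : ℝ) * ((n : ℝ) / N) ^ 2 +
        (m : ℝ) * ((m : ℝ) - 1) * ((n : ℝ) * N - (n : ℝ) ^ 2) /
          ((N : ℝ) ^ 2 * ((N : ℝ) - 1))) ≤
      ((1 / (N.choose m : ℝ)) *
        ∑ Λ ∈ Finset.powersetCard m (Finset.univ : Finset (Fin N)),
          ((∑ j ∈ Λ, ∑ k ∈ Λ, ⟪g k, g j⟫ * ⟪f j, f k⟫).re) ^ (p / 2)) ^ (1 / p) := by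
  subst hn
  have hfg : IsDualFrame ℂ f g := hdual
  have hΛ : (powersetCard m (univ : Finset (Fin N))).Nonempty :=
    powersetCard_nonempty.2 (by simpa using hmN)
  calc _ ≤ √((1 / (N.choose m : ℝ)) *
          ∑ Λ ∈ powersetCard m univ, RCLike.re (erasureError ℂ f g Λ)) :=
        Real.sqrt_le_sqrt (by simpa using hfg.le_mean_re_erasureError (by simpa) (by simpa))
    _ ≤ _ := by
        have h := Real.sqrt_mean_le_rpow_mean hΛ
          (fun Λ _ => re_erasureError_nonneg (𝕜 := ℂ) f g Λ) hp
        rwa [card_powersetCard, card_univ, Fintype.card_fin] at h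

/-- Let `F = (f₁,…,f_N)`, `N ≥ 2`, be a uniform tight frame with
bound `A > 0` for an `n`-dimensional complex inner product space `H`, with
`|⟨f i, f j⟩|` constant over pairs `i ≠ j`.  Let `p ≥ 2` and let `G` be a dual
frame of `F` whose `1`-erasure Frobenius average error equals `n/N`.  Then for
every `1 ≤ m ≤ N`, the `m`-erasure Frobenius average error satisfies
`AE_F^{(m),p}(F,G) ≥ √( m (n/N)² + m(m−1)(nN − n²)/(N²(N−1)) )`. -/
theorem stmt_8 {H : Type*} [NormedAddCommGroup H] [InnerProductSpace ℂ H]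
    [FiniteDimensional ℂ H] (n N : ℕ) (hn : Module.finrank ℂ H = n)
    (hN : 2 ≤ N) (f : Fin N → H) (A : ℝ) (hA : 0 < A)
    (htight : ∀ x : H, ∑ i, ‖⟪f i, x⟫‖ ^ 2 = A * ‖x‖ ^ 2)
    (huniform : ∀ i j, ‖f i‖ = ‖f j‖)
    (hequi : ∃ c : ℝ, ∀ i j, i ≠ j → ‖⟪f i, f j⟫‖ = c)
    (p : ℝ) (hp : 2 ≤ p)
    (g : Fin N → H)
    (hdual : ∀ x : H, x = ∑ i, ⟪f i, x⟫ • g i)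
    (hopt : ((1 / (N : ℝ)) * ∑ i, (‖f i‖ * ‖g i‖) ^ p) ^ (1 / p) = (n : ℝ) / N)
    (m : ℕ) (hm1 : 1 ≤ m) (hmN : m ≤ N) :
    Real.sqrt ((m : ℝ) * ((n : ℝ) / N) ^ 2 +
        (m : ℝ) * ((m : ℝ) - 1) * ((n : ℝ) * N - (n : ℝ) ^ 2) /
          ((N : ℝ) ^ 2 * ((N : ℝ) - 1))) ≤
      ((1 / (N.choose m : ℝ)) *
        ∑ Λ ∈ Finset.powersetCard m (Finset.univ : Finset (Fin N)),
          ((∑ j ∈ Λ, ∑ k ∈ Λ, ⟪g k, g j⟫ * ⟪f j, f k⟫).re) ^ (p / 2)) ^ (1 / p) :=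
  stmt_8_general n N hn hN f p hp g hdual m hmN
end

section
/- Let F = (f_1,…,f_N) be a uniform tight frame with bound A > 0 for an n-dimensional complex inner product space H such that |⟨f_i,f_j⟩| is the same for all pairs i ≠ j, and let p > 1. If G = (g_1,…,g_N) is a dual frame of F with ((1/N)∑_{i=1}^N (‖f_i‖·‖g_i‖)^p)^{1/p} = n/N, then g_i = f_i/A for all i; that is, the canonical dual S_F^{-1}F is the unique dual frame of F attaining the minimal 1-erasure Frobenius average error n/N. -/
/-!
For a dual pair the operator `∑ i, ⟪f i, ·⟫ • g i` is the identity, so taking traces gives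
`∑ i, ⟪f i, g i⟫ = n`; hence `n ≤ ∑ i, ‖f i‖ * ‖g i‖` by Cauchy–Schwarz. The power mean
inequality turns the assumption on the `p`-mean into the reverse inequality, and strict
convexity of `t ↦ t ^ p` forces `‖f i‖ * ‖g i‖ = n / N` for every `i`, with equality in every
Cauchy–Schwarz estimate. So each `g i` is a nonnegative multiple of `f i`, and the factor is
`(n / N) / ‖f i‖ ^ 2 = 1 / A` because a uniform tight frame has `‖f i‖ ^ 2 = A n / N`.
-/

open scoped InnerProductSpace
open RCLike

section Frame

variable {𝕜 E ι : Type*} [RCLike 𝕜] [NormedAddCommGroup E] [InnerProductSpace 𝕜 E] [Fintype ι]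

theorem sum_norm_sq_eq_mul_finrank_of_tight [FiniteDimensional 𝕜 E] {f : ι → E} {A : ℝ}
    (htight : ∀ x, ∑ i, ‖⟪f i, x⟫_𝕜‖ ^ 2 = A * ‖x‖ ^ 2) :
    ∑ i, ‖f i‖ ^ 2 = A * Module.finrank 𝕜 E := by
  let b := stdOrthonormalBasis 𝕜 E
  calc ∑ i, ‖f i‖ ^ 2 = ∑ k, ∑ i, ‖⟪f i, b k⟫_𝕜‖ ^ 2 := by
        simp_rw [← b.sum_sq_norm_inner_left]; exact Finset.sum_comm
    _ = ∑ _k : Fin (Module.finrank 𝕜 E), A := by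
        simp [htight, b.orthonormal.1]
    _ = A * Module.finrank 𝕜 E := by simp [mul_comm]

theorem sum_inner_eq_finrank_of_dual [FiniteDimensional 𝕜 E] {f g : ι → E}
    (hdual : ∀ x, x = ∑ i, ⟪f i, x⟫_𝕜 • g i) :
    ∑ i, ⟪f i, g i⟫_𝕜 = Module.finrank 𝕜 E := by
  have hid : ∑ i, (InnerProductSpace.rankOne 𝕜 (g i) (f i) : E →ₗ[𝕜] E) = LinearMap.id := by
    ext x; simp [← hdual x]
  simpa [InnerProductSpace.trace_rankOne] using congrArg (LinearMap.trace 𝕜 E) hid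

theorem eq_div_norm_smul_of_re_inner_eq_norm_mul {x y : E} (hx : x ≠ 0)
    (h : re ⟪x, y⟫_𝕜 = ‖x‖ * ‖y‖) : y = (‖y‖ / ‖x‖ : 𝕜) • x := by
  have hinner : ⟪x, y⟫_𝕜 = (‖x‖ : 𝕜) * ‖y‖ := by
    have hle : ‖⟪x, y⟫_𝕜‖ ≤ re ⟪x, y⟫_𝕜 := h ▸ norm_inner_le_norm x y
    rw [← re_eq_self_of_le hle, h, ofReal_mul]
  exact ((inner_eq_norm_mul_iff_div hx).1 hinner).symm

end Frame

theorem Real.eq_of_powerMean_le_mean {ι : Type*} [Fintype ι] {a : ι → ℝ} {p c : ℝ}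
    (hp : 1 < p) (ha : ∀ i, 0 ≤ a i)
    (hpow : ((1 / Fintype.card ι) * ∑ i, a i ^ p) ^ (1 / p) ≤ c)
    (hmean : c ≤ (1 / Fintype.card ι) * ∑ i, a i) : ∀ i, a i = c := by
  intro i
  have hcard : (0 : ℝ) < Fintype.card ι := by
    exact_mod_cast Fintype.card_pos_iff.mpr ⟨i⟩
  set w : ι → ℝ := fun _ => 1 / Fintype.card ι
  have hw : ∑ j, w j = 1 := by
    simp only [w, Finset.sum_const, Finset.card_univ, nsmul_eq_mul]
    field_simp
  set m := ∑ j, w j • a j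
  have hm : m = (1 / Fintype.card ι) * ∑ j, a j := by simp [m, w, Finset.mul_sum]
  have hmp : ∑ j, w j • a j ^ p = (1 / Fintype.card ι) * ∑ j, a j ^ p := by
    simp [w, Finset.mul_sum]
  set M := (1 / Fintype.card ι) * ∑ j, a j ^ p
  have hM0 : 0 ≤ M :=
    mul_nonneg (by positivity) (Finset.sum_nonneg fun j _ => Real.rpow_nonneg (ha j) p)
  have hm0 : 0 ≤ m := hm ▸ mul_nonneg (by positivity) (Finset.sum_nonneg fun j _ => ha j)
  have hp0 : 0 < p := one_pos.trans hp
  have hc : 0 ≤ c := (Real.rpow_nonneg hM0 _).trans hpow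
  have hMc : M ≤ c ^ p := calc
    M = (M ^ (1 / p)) ^ p := by
      rw [← Real.rpow_mul hM0, one_div_mul_cancel hp0.ne', Real.rpow_one]
    _ ≤ c ^ p := Real.rpow_le_rpow (Real.rpow_nonneg hM0 _) hpow hp0.le
  have hjensen : m ^ p ≤ M := hmp ▸
    (convexOn_rpow hp.le).map_sum_le (fun _ _ => by positivity) hw (fun j _ => ha j)
  have hmc : m = c :=
    le_antisymm ((Real.rpow_le_rpow_iff hm0 hc hp0).1 (hjensen.trans hMc)) (hm ▸ hmean)
  have hjensen_eq : m ^ p = ∑ j, w j • a j ^ p := hmp ▸ le_antisymm hjensen (hmc ▸ hMc)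
  rw [← hmc]
  exact ((strictConvexOn_rpow hp).map_sum_eq_iff (fun _ _ => by positivity) hw
    (fun j _ => Set.mem_Ici.mpr (ha j))).1 hjensen_eq i (Finset.mem_univ i)

open scoped ComplexInnerProductSpace

theorem stmt_9_general {H : Type*} [NormedAddCommGroup H] [InnerProductSpace ℂ H]
    [FiniteDimensional ℂ H] (n N : ℕ) (hn : Module.finrank ℂ H = n)
    (f : Fin N → H) (A : ℝ) (hA : 0 < A)
    (htight : ∀ x : H, ∑ i, ‖⟪f i, x⟫‖ ^ 2 = A * ‖x‖ ^ 2)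
    (huniform : ∀ i j, ‖f i‖ = ‖f j‖)
    (p : ℝ) (hp : 1 < p)
    (g : Fin N → H)
    (hdual : ∀ x : H, x = ∑ i, ⟪f i, x⟫ • g i)
    (hopt : ((1 / (N : ℝ)) * ∑ i, (‖f i‖ * ‖g i‖) ^ p) ^ (1 / p) = (n : ℝ) / N) :
    ∀ i, g i = (A : ℂ)⁻¹ • f i := by
  intro i
  obtain rfl | hn0 := n.eq_zero_or_pos
  · have : Subsingleton H := Module.finrank_zero_iff.mp hn
    exact Subsingleton.elim _ _
  have hN : (0 : ℝ) < N := by exact_mod_cast i.pos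
  have hf_sq : ‖f i‖ ^ 2 = A * n / N := by
    have := sum_norm_sq_eq_mul_finrank_of_tight htight
    simp only [huniform _ i, Finset.sum_const, Finset.card_univ, Fintype.card_fin, nsmul_eq_mul,
      hn] at this
    field_simp; linarith
  have hf0 : f i ≠ 0 :=
    norm_ne_zero_iff.1 <| (pow_ne_zero_iff two_ne_zero).1 <| hf_sq ▸ by positivity
  have hre_le : ∀ j, (⟪f j, g j⟫).re ≤ ‖f j‖ * ‖g j‖ :=
    fun j => (Complex.re_le_norm _).trans (norm_inner_le_norm _ _)
  have hsum_re : ∑ j, (⟪f j, g j⟫).re = n := by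
    simpa [hn] using congrArg Complex.re (sum_inner_eq_finrank_of_dual hdual)
  have hnorm_mul : ∀ j, ‖f j‖ * ‖g j‖ = n / N := by
    refine Real.eq_of_powerMean_le_mean hp (fun j => by positivity) (by simpa using hopt.le) ?_
    rw [Fintype.card_fin, ← hsum_re, one_div_mul_eq_div]
    gcongr with j; exact hre_le j
  have hre : (⟪f i, g i⟫).re = ‖f i‖ * ‖g i‖ := by
    refine (Finset.sum_eq_sum_iff_of_le fun j _ => hre_le j).1 ?_ i (Finset.mem_univ i)
    simp only [hsum_re, hnorm_mul, Finset.sum_const, Finset.card_univ, Fintype.card_fin,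
      nsmul_eq_mul]
    field_simp
  rw [eq_div_norm_smul_of_re_inner_eq_norm_mul (𝕜 := ℂ) (y := g i) hf0 hre]
  have hratio : ‖g i‖ / ‖f i‖ = A⁻¹ := by
    rw [← mul_div_mul_left _ _ (norm_ne_zero_iff.2 hf0), ← sq, hnorm_mul, hf_sq]
    field_simp
  rw [← ofReal_div, hratio, ofReal_inv]
  rfl

/-- Let `F = (f₁,…,f_N)` be a uniform tight frame with bound
`A > 0` for an `n`-dimensional complex inner product space `H` such that
`|⟨f i, f j⟩|` is the same for all pairs `i ≠ j`, and let `p > 1`.  If `G` is a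
dual frame of `F` with `((1/N) ∑ i, (‖f i‖·‖g i‖)^p)^(1/p) = n/N`, then
`g i = f i / A` for all `i`; i.e. the canonical dual is the unique dual frame
attaining the minimal `1`-erasure Frobenius average error `n/N`. -/
theorem stmt_9 {H : Type*} [NormedAddCommGroup H] [InnerProductSpace ℂ H]
    [FiniteDimensional ℂ H] (n N : ℕ) (hn : Module.finrank ℂ H = n)
    (f : Fin N → H) (A : ℝ) (hA : 0 < A)
    (htight : ∀ x : H, ∑ i, ‖⟪f i, x⟫‖ ^ 2 = A * ‖x‖ ^ 2)
    (huniform : ∀ i j, ‖f i‖ = ‖f j‖)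
    (hequi : ∃ c : ℝ, ∀ i j, i ≠ j → ‖⟪f i, f j⟫‖ = c)
    (p : ℝ) (hp : 1 < p)
    (g : Fin N → H)
    (hdual : ∀ x : H, x = ∑ i, ⟪f i, x⟫ • g i)
    (hopt : ((1 / (N : ℝ)) * ∑ i, (‖f i‖ * ‖g i‖) ^ p) ^ (1 / p) = (n : ℝ) / N) :
    ∀ i, g i = (A : ℂ)⁻¹ • f i :=
  stmt_9_general n N hn f A hA htight huniform p hp g hdual hopt
end

section
/- Let F = (f_1,…,f_N) be a frame for an n-dimensional complex inner product space H that admits a 1-uniform dual, i.e., there exists a dual frame G₀ of F with ⟨f_i, (g₀)_i⟩ = n/N for all i, and let p > 1. Then a dual frame G of F is 1-erasure spectrally optimal (i.e., AE_R^{(1),p}(F,G) ≤ AE_R^{(1),p}(F,G') for every dual frame G' of F) if and only if ⟨f_i, g_i⟩ = n/N for all 1 ≤ i ≤ N, i.e., if and only if G is a 1-uniform dual of F. -/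
open scoped ComplexInnerProductSpace

/-!
For every dual `g` of `f` the diagonal values `⟪g i, f i⟫` sum to the trace of the identity,
`n`, since the identity is `∑ i, rankOne (g i) (f i)`. As `z ↦ ‖z‖ ^ p` is strictly convex on `ℂ`
for `p > 1`, Jensen's inequality bounds `(1/N) ∑ i, ‖⟪g i, f i⟫‖ ^ p` below by `(n/N) ^ p`, with
equality exactly when every `⟪g i, f i⟫` equals `n/N`. A `1`-uniform dual attains the bound, so
the optimal duals are exactly those attaining it.
-/

open Finset

section NormRpow

variable {E : Type*} [NormedAddCommGroup E] [NormedSpace ℝ E] {p : ℝ}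

lemma norm_combo_rpow_le (hp : 1 ≤ p) {x y : E} {a b : ℝ} (ha : 0 ≤ a) (hb : 0 ≤ b) :
    ‖a • x + b • y‖ ^ p ≤ (a * ‖x‖ + b * ‖y‖) ^ p := by
  refine Real.rpow_le_rpow (norm_nonneg _) ?_ (by linarith)
  calc ‖a • x + b • y‖ ≤ ‖a • x‖ + ‖b • y‖ := norm_add_le _ _
    _ = a * ‖x‖ + b * ‖y‖ := by
      rw [norm_smul, norm_smul, Real.norm_of_nonneg ha, Real.norm_of_nonneg hb]

lemma convexOn_norm_rpow (hp : 1 ≤ p) : ConvexOn ℝ Set.univ fun x : E ↦ ‖x‖ ^ p := by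
  refine ⟨convex_univ, fun x _ y _ a b ha hb hab ↦ ?_⟩
  exact (norm_combo_rpow_le hp ha hb).trans
    ((convexOn_rpow hp).2 (norm_nonneg x) (norm_nonneg y) ha hb hab)

lemma strictConvexOn_norm_rpow [StrictConvexSpace ℝ E] (hp : 1 < p) :
    StrictConvexOn ℝ Set.univ fun x : E ↦ ‖x‖ ^ p := by
  refine ⟨convex_univ, fun x _ y _ hxy a b ha hb hab ↦ ?_⟩
  rcases eq_or_ne ‖x‖ ‖y‖ with hnorm | hnorm
  · have hlt : ‖a • x + b • y‖ < ‖x‖ := norm_combo_lt_of_ne le_rfl hnorm.ge hxy ha hb hab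
    calc ‖a • x + b • y‖ ^ p < ‖x‖ ^ p := Real.rpow_lt_rpow (norm_nonneg _) hlt (by linarith)
      _ = a • ‖x‖ ^ p + b • ‖y‖ ^ p := by
        rw [← hnorm, smul_eq_mul, smul_eq_mul, ← add_mul, hab, one_mul]
  · exact (norm_combo_rpow_le hp.le ha.le hb.le).trans_lt
      ((strictConvexOn_rpow hp).2 (norm_nonneg x) (norm_nonneg y) hnorm ha hb hab)

variable {ι : Type*} [Fintype ι] [Nonempty ι]

lemma norm_average_rpow_le (hp : 1 ≤ p) (a : ι → E) :
    ‖(Fintype.card ι : ℝ)⁻¹ • ∑ i, a i‖ ^ p ≤ (Fintype.card ι : ℝ)⁻¹ * ∑ i, ‖a i‖ ^ p := by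
  have h := (convexOn_norm_rpow (E := E) hp).map_sum_le (t := univ)
    (w := fun _ ↦ (Fintype.card ι : ℝ)⁻¹) (p := a) (fun _ _ ↦ by positivity)
    (by simp) (fun _ _ ↦ Set.mem_univ _)
  simpa only [← smul_sum, smul_eq_mul, ← mul_sum] using h

lemma norm_average_rpow_eq_iff [StrictConvexSpace ℝ E] (hp : 1 < p) (a : ι → E) :
    ‖(Fintype.card ι : ℝ)⁻¹ • ∑ i, a i‖ ^ p = (Fintype.card ι : ℝ)⁻¹ * ∑ i, ‖a i‖ ^ p ↔
      ∀ i, a i = (Fintype.card ι : ℝ)⁻¹ • ∑ j, a j := by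
  have h := (strictConvexOn_norm_rpow (E := E) hp).map_sum_eq_iff_of_pos (t := univ)
    (w := fun _ ↦ (Fintype.card ι : ℝ)⁻¹) (p := a) (fun _ _ ↦ by positivity)
    (by simp) (fun _ _ ↦ Set.mem_univ _)
  simp only [← smul_sum, smul_eq_mul, ← mul_sum, mem_univ, forall_const] at h
  rw [h]
  constructor
  · intro hconst i
    calc a i = (Fintype.card ι : ℝ)⁻¹ • ∑ _j : ι, a i := by
          rw [sum_const, card_univ, ← Nat.cast_smul_eq_nsmul ℝ, smul_smul,
            inv_mul_cancel₀ (by positivity), one_smul]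
      _ = (Fintype.card ι : ℝ)⁻¹ • ∑ j, a j := by
          congr 1
          exact sum_congr rfl fun j _ ↦ @hconst i j
  · intro havg j k
    rw [havg j, havg k]

end NormRpow

lemma sum_inner_eq_finrank_of_reconstruction {𝕜 E ι : Type*} [RCLike 𝕜] [NormedAddCommGroup E]
    [InnerProductSpace 𝕜 E] [FiniteDimensional 𝕜 E] [Fintype ι] {f g : ι → E}
    (hdual : ∀ x : E, x = ∑ i, inner 𝕜 (f i) x • g i) :
    ∑ i, inner 𝕜 (g i) (f i) = Module.finrank 𝕜 E := by
  have hid : LinearMap.id =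
      ∑ i, (InnerProductSpace.rankOne 𝕜 (g i) (f i) : E →L[𝕜] E).toLinearMap := by
    ext x
    simp [← hdual x]
  have htrace := congrArg (LinearMap.trace 𝕜 E) hid
  simp only [LinearMap.trace_id, map_sum, InnerProductSpace.trace_rankOne] at htrace
  rw [← map_natCast (starRingEnd 𝕜), htrace, map_sum]
  simp

section DualFrame

variable {H : Type*} [NormedAddCommGroup H] [InnerProductSpace ℂ H] [FiniteDimensional ℂ H]
  {n N : ℕ} {f g : Fin N → H} {p : ℝ}

lemma average_inner_eq_of_dual (hn : Module.finrank ℂ H = n)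
    (hdual : ∀ x : H, x = ∑ i, ⟪f i, x⟫ • g i) :
    (Fintype.card (Fin N) : ℝ)⁻¹ • ∑ i, ⟪g i, f i⟫ = (n : ℂ) / N := by
  rw [sum_inner_eq_finrank_of_reconstruction hdual, hn, Fintype.card_fin, Complex.real_smul]
  push_cast
  ring

lemma norm_div_rpow_le_of_dual [NeZero N] (hn : Module.finrank ℂ H = n)
    (hdual : ∀ x : H, x = ∑ i, ⟪f i, x⟫ • g i) (hp : 1 ≤ p) :
    ‖(n : ℂ) / N‖ ^ p ≤ 1 / (N : ℝ) * ∑ i, ‖⟪g i, f i⟫‖ ^ p := by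
  have h := norm_average_rpow_le hp fun i ↦ ⟪g i, f i⟫
  rwa [average_inner_eq_of_dual hn hdual, Fintype.card_fin, ← one_div] at h

lemma norm_div_rpow_eq_iff_of_dual [NeZero N] (hn : Module.finrank ℂ H = n)
    (hdual : ∀ x : H, x = ∑ i, ⟪f i, x⟫ • g i) (hp : 1 < p) :
    ‖(n : ℂ) / N‖ ^ p = 1 / (N : ℝ) * ∑ i, ‖⟪g i, f i⟫‖ ^ p ↔
      ∀ i, ⟪g i, f i⟫ = (n : ℂ) / N := by
  have h := norm_average_rpow_eq_iff hp fun i ↦ ⟪g i, f i⟫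
  rwa [average_inner_eq_of_dual hn hdual, Fintype.card_fin, ← one_div] at h

end DualFrame

theorem stmt_13_general {H : Type*} [NormedAddCommGroup H] [InnerProductSpace ℂ H]
    [FiniteDimensional ℂ H] (n N : ℕ) (hn : Module.finrank ℂ H = n)
    (f : Fin N → H)
    (g₀ : Fin N → H)
    (hdual₀ : ∀ x : H, x = ∑ i, ⟪f i, x⟫ • g₀ i)
    (hunif₀ : ∀ i, ⟪g₀ i, f i⟫ = (n : ℂ) / N)
    (p : ℝ) (hp : 1 < p)
    (g : Fin N → H)
    (hdual : ∀ x : H, x = ∑ i, ⟪f i, x⟫ • g i) :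
    (∀ g' : Fin N → H, (∀ x : H, x = ∑ i, ⟪f i, x⟫ • g' i) →
        ((1 / (N : ℝ)) * ∑ i, ‖⟪g i, f i⟫‖ ^ p) ^ (1 / p) ≤
          ((1 / (N : ℝ)) * ∑ i, ‖⟪g' i, f i⟫‖ ^ p) ^ (1 / p)) ↔
      ∀ i, ⟪g i, f i⟫ = (n : ℂ) / N := by
  rcases Nat.eq_zero_or_pos N with rfl | hN
  · simp
  have : NeZero N := ⟨hN.ne'⟩
  rw [← norm_div_rpow_eq_iff_of_dual hn hdual hp]
  constructor
  · intro hopt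
    refine le_antisymm (norm_div_rpow_le_of_dual hn hdual hp.le) ?_
    rw [(norm_div_rpow_eq_iff_of_dual hn hdual₀ hp).2 hunif₀]
    exact (Real.rpow_le_rpow_iff (by positivity) (by positivity) (by positivity)).1
      (hopt g₀ hdual₀)
  · intro hunif g' hg'
    rw [Real.rpow_le_rpow_iff (by positivity) (by positivity) (by positivity), ← hunif]
    exact norm_div_rpow_le_of_dual hn hg' hp.le

/-- Let `F` be a frame for an `n`-dimensional complex inner
product space `H` that admits a `1`-uniform dual `G₀` (a dual frame with
`⟨f i, (g₀) i⟩ = n/N` for all `i`), and let `p > 1`.  Then a dual frame `G` of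
`F` is `1`-erasure spectrally optimal (minimizes
`AE_R^{(1),p}(F,·) = ((1/N) ∑ i, |⟨f i, · i⟩|^p)^(1/p)` among all duals) iff
`⟨f i, g i⟩ = n/N` for all `i`, i.e. iff `G` is a `1`-uniform dual of `F`. -/
theorem stmt_13 {H : Type*} [NormedAddCommGroup H] [InnerProductSpace ℂ H]
    [FiniteDimensional ℂ H] (n N : ℕ) (hn : Module.finrank ℂ H = n)
    (f : Fin N → H)
    (hframe : Submodule.span ℂ (Set.range f) = ⊤)
    (g₀ : Fin N → H)
    (hdual₀ : ∀ x : H, x = ∑ i, ⟪f i, x⟫ • g₀ i)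
    (hunif₀ : ∀ i, ⟪g₀ i, f i⟫ = (n : ℂ) / N)
    (p : ℝ) (hp : 1 < p)
    (g : Fin N → H)
    (hdual : ∀ x : H, x = ∑ i, ⟪f i, x⟫ • g i) :
    (∀ g' : Fin N → H, (∀ x : H, x = ∑ i, ⟪f i, x⟫ • g' i) →
        ((1 / (N : ℝ)) * ∑ i, ‖⟪g i, f i⟫‖ ^ p) ^ (1 / p) ≤
          ((1 / (N : ℝ)) * ∑ i, ‖⟪g' i, f i⟫‖ ^ p) ^ (1 / p)) ↔
      ∀ i, ⟪g i, f i⟫ = (n : ℂ) / N :=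
  stmt_13_general n N hn f g₀ hdual₀ hunif₀ p hp g hdual
end

section
/- Let F = (f_1,…,f_N) be a frame for an n-dimensional complex inner product space H with frame operator S_F, and let p > 1. Note that each ⟨f_i, S_F^{-1}f_i⟩ is a nonnegative real number. Set M := max_{1≤i≤N} Re⟨f_i, S_F^{-1}f_i⟩, I₁ := {i : Re⟨f_i, S_F^{-1}f_i⟩ = M}, I₂ := {1,…,N} \ I₁, and H_j := span{f_i : i ∈ I_j} for j = 1,2. Assume: (i) H₁ ∩ H₂ = {0}; (ii) the family {f_i : i ∈ I₂} is linearly independent. Then the canonical dual S_F^{-1}F is a 1-erasure spectrally optimal dual of F, i.e., ((1/N)∑_{i=1}^N |⟨f_i, S_F^{-1}f_i⟩|^p)^{1/p} ≤ ((1/N)∑_{i=1}^N |⟨f_i, g_i⟩|^p)^{1/p} for every dual frame G = (g_1,…,g_N) of F. -/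
/-!
Let `h i := g i - S⁻¹ f i` be the difference of the two duals (`⟨·, ·⟩` is linear in its
first argument, so `⟨x, y⟩ = ⟪y, x⟫`). Duality of both gives
`∑ i, ⟨x, f i⟩ h i = 0` for every `x`, equivalently `∑ i, ⟨y, h i⟩ f i = 0` for every `y`.
Splitting the latter sum along `I₁ ⊔ I₂`, hypothesis (i) makes the `I₂`-part vanish and (ii) then
forces `h i = 0` on `I₂`, so `⟨f i, g i⟩ = ⟨f i, S⁻¹ f i⟩` there. The same identity shows that the
trace `∑ i, ⟨f i, h i⟩` vanishes, so on `I₁` the numbers `⟨f i, g i⟩` have the same sum as the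
`⟨f i, S⁻¹ f i⟩`, which all equal the real number `M` (`⟨f i, S⁻¹ f i⟩ = ⟨S y, y⟩ ≥ 0` for
`y = S⁻¹ f i`). Jensen's inequality for `t ↦ t ^ p` on `I₁` concludes.
-/

open Finset
open scoped ComplexInnerProductSpace ComplexOrder InnerProductSpace

section Frames

variable {𝕜 E ι : Type*} [RCLike 𝕜] [NormedAddCommGroup E] [InnerProductSpace 𝕜 E] [Fintype ι]

theorem inner_sum_inner_smul_self_nonneg (f : ι → E) (x : E) :
    0 ≤ ⟪x, ∑ i, ⟪f i, x⟫_𝕜 • f i⟫_𝕜 := by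
  rw [inner_sum]
  refine sum_nonneg fun i _ => ?_
  rw [inner_smul_right, ← inner_conj_symm x (f i), RCLike.mul_conj]
  positivity

theorem forall_sum_inner_smul_eq_zero_comm (f h : ι → E) :
    (∀ x, ∑ i, ⟪f i, x⟫_𝕜 • h i = 0) ↔ ∀ y, ∑ i, ⟪h i, y⟫_𝕜 • f i = 0 := by
  suffices key : ∀ f h : ι → E, (∀ x, ∑ i, ⟪f i, x⟫_𝕜 • h i = 0) →
      ∀ y, ∑ i, ⟪h i, y⟫_𝕜 • f i = 0 from ⟨key f h, key h f⟩
  intro f h hfh y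
  refine ext_inner_right 𝕜 fun x => ?_
  have hyx := congrArg (⟪y, ·⟫_𝕜) (hfh x)
  simp only [inner_sum, inner_smul_right, inner_zero_right] at hyx
  simp only [sum_inner, inner_smul_left, inner_conj_symm, inner_zero_left]
  rw [← hyx]
  exact sum_congr rfl fun _ _ => mul_comm _ _

theorem sum_inner_eq_zero_of_sum_inner_smul_eq_zero {f φ h : ι → E}
    (hφ : ∀ x, ∑ i, ⟪f i, x⟫_𝕜 • φ i = x) (hh : ∀ y, ∑ i, ⟪h i, y⟫_𝕜 • f i = 0) :
    ∑ i, ⟪h i, f i⟫_𝕜 = 0 :=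
  calc ∑ j, ⟪h j, f j⟫_𝕜 = ∑ j, ∑ i, ⟪h j, φ i⟫_𝕜 * ⟪f i, f j⟫_𝕜 := by
        refine sum_congr rfl fun j _ => ?_
        conv_lhs => rw [← hφ (f j)]
        simp only [inner_sum, inner_smul_right, mul_comm]
    _ = ∑ i, ⟪f i, ∑ j, ⟪h j, φ i⟫_𝕜 • f j⟫_𝕜 := by
        rw [sum_comm]
        simp only [inner_sum, inner_smul_right]
    _ = 0 := by simp [hh]

end Frames

theorem eq_zero_of_sum_smul_eq_zero_of_disjoint {𝕜 E ι : Type*} [Field 𝕜] [AddCommGroup E]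
    [Module 𝕜 E] [Fintype ι] {f : ι → E} (p : ι → Prop) [DecidablePred p]
    (hdisj : Disjoint (Submodule.span 𝕜 (f '' {i | p i}))
      (Submodule.span 𝕜 (f '' {i | ¬ p i})))
    (hli : LinearIndependent 𝕜 fun i : {i // ¬ p i} => f i)
    {c : ι → 𝕜} (hc : ∑ i, c i • f i = 0) {i : ι} (hi : ¬ p i) : c i = 0 := by
  rw [← sum_filter_add_sum_filter_not univ p, add_comm, add_eq_zero_iff_eq_neg] at hc
  have hspan : ∀ q : ι → Prop, [DecidablePred q] →
      ∑ j ∈ univ.filter q, c j • f j ∈ Submodule.span 𝕜 (f '' {j | q j}) := fun q _ =>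
    Submodule.sum_mem _ fun j hj => Submodule.smul_mem _ _ <|
      Submodule.subset_span ⟨j, (mem_filter.1 hj).2, rfl⟩
  have hzero : ∑ j ∈ univ.filter (¬ p ·), c j • f j = 0 :=
    Submodule.disjoint_def.1 hdisj _ (hc ▸ Submodule.neg_mem _ (hspan p)) (hspan (¬ p ·))
  rw [sum_subtype _ (p := (¬ p ·)) (fun j => by simp)] at hzero
  exact Fintype.linearIndependent_iff.1 hli (fun j => c j) hzero ⟨i, hi⟩

theorem card_mul_norm_rpow_le_sum_norm_rpow {𝕜 ι : Type*} [RCLike 𝕜] (s : Finset ι)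
    {z : ι → 𝕜} {c : 𝕜} (hz : ∑ i ∈ s, z i = #s • c) {p : ℝ} (hp : 1 ≤ p) :
    #s * ‖c‖ ^ p ≤ ∑ i ∈ s, ‖z i‖ ^ p := by
  rcases s.eq_empty_or_nonempty with rfl | hs
  · simp
  have hk : (0 : ℝ) < #s := by exact_mod_cast hs.card_pos
  have hmean : ‖c‖ ≤ (#s : ℝ)⁻¹ * ∑ i ∈ s, ‖z i‖ := by
    rw [le_inv_mul_iff₀ hk]
    calc (#s : ℝ) * ‖c‖ = ‖∑ i ∈ s, z i‖ := by rw [hz, nsmul_eq_mul, norm_mul, RCLike.norm_natCast]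
      _ ≤ ∑ i ∈ s, ‖z i‖ := norm_sum_le _ _
  have hjensen := Real.rpow_arith_mean_le_arith_mean_rpow s (fun _ => (#s : ℝ)⁻¹)
    (fun i => ‖z i‖) (fun _ _ => by positivity) (by simp [hk.ne']) (fun _ _ => norm_nonneg _) hp
  simp only [← mul_sum] at hjensen
  rw [← le_inv_mul_iff₀ hk]
  exact (Real.rpow_le_rpow (norm_nonneg c) hmean (by linarith)).trans hjensen

theorem sum_norm_rpow_le_of_sum_eq {𝕜 ι : Type*} [RCLike 𝕜] [Fintype ι] [DecidableEq ι]
    (s : Finset ι)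
    {a d : ι → 𝕜} {c : 𝕜} (ha : ∀ i ∈ s, a i = c) (hd : ∀ i ∉ s, d i = a i)
    (hsum : ∑ i, d i = ∑ i, a i) {p : ℝ} (hp : 1 ≤ p) :
    ∑ i, ‖a i‖ ^ p ≤ ∑ i, ‖d i‖ ^ p := by
  have hcompl : ∑ i ∈ sᶜ, d i = ∑ i ∈ sᶜ, a i :=
    sum_congr rfl fun i hi => hd i (mem_compl.1 hi)
  have hcompl_rpow : ∑ i ∈ sᶜ, ‖d i‖ ^ p = ∑ i ∈ sᶜ, ‖a i‖ ^ p :=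
    sum_congr rfl fun i hi => by rw [hd i (mem_compl.1 hi)]
  have hs : ∑ i ∈ s, d i = #s • c := by
    rw [← sum_add_sum_compl s, ← sum_add_sum_compl s a, hcompl] at hsum
    rw [add_right_cancel hsum, sum_congr rfl ha, sum_const]
  rw [← sum_add_sum_compl s, ← sum_add_sum_compl s (fun i => ‖d i‖ ^ p), hcompl_rpow,
    sum_congr rfl fun i hi => by rw [ha i hi], sum_const, nsmul_eq_mul]
  exact add_le_add (card_mul_norm_rpow_le_sum_norm_rpow s hs hp) le_rfl

theorem stmt_15_general {H : Type*} [NormedAddCommGroup H] [InnerProductSpace ℂ H]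
    (N : ℕ)
    (f : Fin N → H)
    (Sinv : H →ₗ[ℂ] H)
    (hSinv₁ : ∀ x : H, ∑ i, ⟪f i, Sinv x⟫ • f i = x)
    (hSinv₂ : ∀ x : H, Sinv (∑ i, ⟪f i, x⟫ • f i) = x)
    (p : ℝ) (hp : 1 < p)
    (M : ℝ)
    (hinter : Submodule.span ℂ (f '' {i | (⟪Sinv (f i), f i⟫).re = M}) ⊓
        Submodule.span ℂ (f '' {i | (⟪Sinv (f i), f i⟫).re ≠ M}) = ⊥)
    (hli : LinearIndependent ℂ
        (fun i : {i : Fin N // (⟪Sinv (f i), f i⟫).re ≠ M} => f (i : Fin N))) :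
    ∀ g : Fin N → H, (∀ x : H, x = ∑ i, ⟪f i, x⟫ • g i) →
      ((1 / (N : ℝ)) * ∑ i, ‖⟪Sinv (f i), f i⟫‖ ^ p) ^ (1 / p) ≤
        ((1 / (N : ℝ)) * ∑ i, ‖⟪g i, f i⟫‖ ^ p) ^ (1 / p) := by
  intro g hg
  have hcan : ∀ x, ∑ i, ⟪f i, x⟫ • Sinv (f i) = x := fun x => by
    simpa only [map_sum, map_smul] using hSinv₂ x
  have hker : ∀ y, ∑ i, ⟪g i - Sinv (f i), y⟫ • f i = 0 :=
    (forall_sum_inner_smul_eq_zero_comm _ _).1 fun x => by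
      simp only [smul_sub, sum_sub_distrib, ← hg, hcan, sub_self]
  have hI₂ : ∀ i, (⟪Sinv (f i), f i⟫).re ≠ M → g i = Sinv (f i) := fun i hi =>
    sub_eq_zero.1 <| inner_self_eq_zero.1 <| eq_zero_of_sum_smul_eq_zero_of_disjoint _
      (disjoint_iff.2 hinter) hli (hker (g i - Sinv (f i))) hi
  have hreal : ∀ i, ⟪Sinv (f i), f i⟫ = (⟪Sinv (f i), f i⟫).re := fun i => by
    have hpos := inner_sum_inner_smul_self_nonneg (𝕜 := ℂ) f (Sinv (f i))
    rw [hSinv₁] at hpos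
    exact Complex.eq_re_of_ofReal_le (r := 0) (by simpa using hpos)
  have hsum : ∑ i, ⟪g i, f i⟫ = ∑ i, ⟪Sinv (f i), f i⟫ := by
    rw [← sub_eq_zero, ← sum_sub_distrib]
    simpa only [inner_sub_left] using sum_inner_eq_zero_of_sum_inner_smul_eq_zero hcan hker
  gcongr (_ * ?_) ^ _
  exact sum_norm_rpow_le_of_sum_eq (univ.filter fun i => (⟪Sinv (f i), f i⟫).re = M)
    (a := fun i => ⟪Sinv (f i), f i⟫) (d := fun i => ⟪g i, f i⟫) (c := M)
    (fun i hi => by rw [hreal i, (mem_filter.1 hi).2])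
    (fun i hi => by rw [hI₂ i (by simpa using hi)]) hsum hp.le

/-- Let `F` be a frame for an `n`-dimensional complex inner
product space `H` with frame operator `S_F` (encoded through its inverse `Sinv`),
and let `p > 1`.  Set `M := max i, Re ⟨f i, Sinv (f i)⟩`, let
`I₁ = {i : Re ⟨f i, Sinv (f i)⟩ = M}`, `I₂` its complement.  Assume
(i) `span{f i : i ∈ I₁} ∩ span{f i : i ∈ I₂} = {0}`; (ii) `{f i : i ∈ I₂}` is
linearly independent.  Then the canonical dual `(Sinv (f i))` is a `1`-erasure
spectrally optimal dual of `F`.  (The paper's `⟨f i, Sinv (f i)⟩` is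
`⟪Sinv (f i), f i⟫`.) -/
theorem stmt_15 {H : Type*} [NormedAddCommGroup H] [InnerProductSpace ℂ H]
    [FiniteDimensional ℂ H] (n N : ℕ) (hn : Module.finrank ℂ H = n)
    (f : Fin N → H)
    (hframe : Submodule.span ℂ (Set.range f) = ⊤)
    (Sinv : H →ₗ[ℂ] H)
    (hSinv₁ : ∀ x : H, ∑ i, ⟪f i, Sinv x⟫ • f i = x)
    (hSinv₂ : ∀ x : H, Sinv (∑ i, ⟪f i, x⟫ • f i) = x)
    (p : ℝ) (hp : 1 < p)
    (M : ℝ)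
    (hMmax : IsGreatest (Set.range fun i => (⟪Sinv (f i), f i⟫).re) M)
    (hinter : Submodule.span ℂ (f '' {i | (⟪Sinv (f i), f i⟫).re = M}) ⊓
        Submodule.span ℂ (f '' {i | (⟪Sinv (f i), f i⟫).re ≠ M}) = ⊥)
    (hli : LinearIndependent ℂ
        (fun i : {i : Fin N // (⟪Sinv (f i), f i⟫).re ≠ M} => f (i : Fin N))) :
    ∀ g : Fin N → H, (∀ x : H, x = ∑ i, ⟪f i, x⟫ • g i) →
      ((1 / (N : ℝ)) * ∑ i, ‖⟪Sinv (f i), f i⟫‖ ^ p) ^ (1 / p) ≤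
        ((1 / (N : ℝ)) * ∑ i, ‖⟪g i, f i⟫‖ ^ p) ^ (1 / p) :=
  stmt_15_general N f Sinv hSinv₁ hSinv₂ p hp M hinter hli
end
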